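/- Let U ⊂ ℂ be an open neighborhood of 0 and let h : U → ℝ be a C¹-smooth function. Fix an integer k ≥ 3 and μ > 0. Suppose h_z(ζ) = −2iμ·ζ̄·|ζ|^{2k−4} + o(|ζ|^{2k−3}) as ζ → 0, where h_z = (1/2)(h_x − i h_y). Then for all sufficiently small σ > 0, the integral ∫₀^{2π} 2·Re[h_z(σe^{it})·(iσe^{it})] dt is strictly positive; in particular it is nonzero, contradicting ∫_γ dh = 0 for the closed curve γ(t) = σe^{it}. -/

import Mathlib

open scoped Real

/-- The Wirtinger derivative `h_z = (1/2)(h_x − i h_y)` of a real-valued function. -/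
noncomputable def wirtingerDz (h : ℂ → ℝ) (ζ : ℂ) : ℂ :=
  (1 / 2 : ℂ) * ((fderiv ℝ h ζ 1 : ℝ) - Complex.I * (fderiv ℝ h ζ Complex.I : ℝ))

/-!
On the circle `ζ = σ e^{it}` we have `γ'(t) = iζ`, and the model term `-2iμ ζ̄ |ζ|^{2k-4}` times
`iζ` is exactly the positive real `2μσ^{2k-2}`. The `o(|ζ|^{2k-3})` error times `iζ` has modulus
at most `μσ^{2k-2}` for small `σ`, so the integrand `2 Re[h_z(ζ) iζ]` lies between `2μσ^{2k-2}`
and `6μσ^{2k-2}` and its integral over `[0, 2π]` is positive.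
-/

open Complex ComplexConjugate MeasureTheory

@[fun_prop]
lemma measurable_wirtingerDz (h : ℂ → ℝ) : Measurable (wirtingerDz h) := by
  unfold wirtingerDz
  fun_prop

lemma abs_re_mul_sub_re_mul_le (w c v : ℂ) : |(w * v).re - (c * v).re| ≤ ‖w - c‖ * ‖v‖ := by
  rw [← sub_re, ← sub_mul, ← norm_mul]
  exact abs_re_le_norm _

lemma model_mul_I_mul (μ : ℝ) (n : ℕ) (ζ : ℂ) :
    -2 * I * μ * conj ζ * ‖ζ‖ ^ n * (I * ζ) = ((2 * μ * ‖ζ‖ ^ (n + 2) : ℝ) : ℂ) := by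
  have hconj : conj ζ * ζ = ((‖ζ‖ ^ 2 : ℝ) : ℂ) := by
    rw [mul_comm, mul_conj, normSq_eq_norm_sq]
  calc -2 * I * μ * conj ζ * ‖ζ‖ ^ n * (I * ζ)
      = -2 * (I * I) * μ * (conj ζ * ζ) * ‖ζ‖ ^ n := by ring
    _ = _ := by rw [I_mul_I, hconj]; push_cast; ring

lemma abs_re_mul_I_mul_sub_le {μ : ℝ} {k : ℕ} (hk : 2 ≤ k) {w ζ : ℂ}
    (hw : ‖w - -2 * I * μ * conj ζ * ‖ζ‖ ^ (2 * k - 4)‖ ≤ μ * ‖ζ‖ ^ (2 * k - 3)) :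
    |(w * (I * ζ)).re - 2 * μ * ‖ζ‖ ^ (2 * k - 2)| ≤ μ * ‖ζ‖ ^ (2 * k - 2) := by
  have hmodel := model_mul_I_mul μ (2 * k - 4) ζ
  rw [show 2 * k - 4 + 2 = 2 * k - 2 by omega] at hmodel
  have hpow : ‖ζ‖ ^ (2 * k - 3) * ‖ζ‖ = ‖ζ‖ ^ (2 * k - 2) := by
    rw [← pow_succ]; congr 1; omega
  calc |(w * (I * ζ)).re - 2 * μ * ‖ζ‖ ^ (2 * k - 2)|
      = |(w * (I * ζ)).re - (-2 * I * μ * conj ζ * ‖ζ‖ ^ (2 * k - 4) * (I * ζ)).re| := by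
        rw [hmodel, ofReal_re]
    _ ≤ ‖w - -2 * I * μ * conj ζ * ‖ζ‖ ^ (2 * k - 4)‖ * ‖I * ζ‖ := abs_re_mul_sub_re_mul_le _ _ _
    _ ≤ μ * ‖ζ‖ ^ (2 * k - 3) * ‖ζ‖ := by
        rw [norm_mul, norm_I, one_mul]; gcongr
    _ = μ * ‖ζ‖ ^ (2 * k - 2) := by rw [mul_assoc, hpow]

lemma intervalIntegral_pos_of_pos_of_le {f : ℝ → ℝ} {a b M : ℝ} (hab : a < b)
    (hf : AEStronglyMeasurable f) (hpos : ∀ t, 0 < f t) (hle : ∀ t, f t ≤ M) :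
    0 < ∫ t in a..b, f t := by
  refine intervalIntegral.intervalIntegral_pos_of_pos_on ?_ (fun t _ => hpos t) hab
  refine (intervalIntegrable_const (c := M)).mono_fun' hf.restrict (ae_of_all _ fun t => ?_)
  change ‖f t‖ ≤ M
  rw [Real.norm_of_nonneg (hpos t).le]
  exact hle t

theorem loop_integral_of_dh_positive_general
    (h : ℂ → ℝ) (k : ℕ) (hk : 3 ≤ k) (μ : ℝ) (hμ : 0 < μ)
    (hasymp : (fun ζ : ℂ =>
        wirtingerDz h ζ - (-2 * Complex.I * μ * (starRingEnd ℂ ζ) * ‖ζ‖ ^ (2 * k - 4)))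
      =o[nhds 0] (fun ζ : ℂ => ‖ζ‖ ^ (2 * k - 3))) :
    ∃ σ₀ > 0, ∀ σ : ℝ, 0 < σ → σ < σ₀ →
      0 < ∫ t in (0 : ℝ)..(2 * π),
        2 * (wirtingerDz h (σ * Complex.exp (t * Complex.I))
              * (Complex.I * σ * Complex.exp (t * Complex.I))).re := by
  obtain ⟨δ, hδ, hclose⟩ := Metric.eventually_nhds_iff.mp (hasymp.def hμ)
  refine ⟨δ, hδ, fun σ hσ hσδ => ?_⟩
  have hbound (t : ℝ) : |(wirtingerDz h (σ * exp (t * I)) * (I * σ * exp (t * I))).re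
      - 2 * μ * σ ^ (2 * k - 2)| ≤ μ * σ ^ (2 * k - 2) := by
    have hnorm : ‖(σ : ℂ) * exp (t * I)‖ = σ := by
      rw [norm_mul, norm_exp_ofReal_mul_I, norm_real, Real.norm_of_nonneg hσ.le, mul_one]
    have hw := hclose (y := σ * exp (t * I)) (by rwa [dist_zero_right, hnorm])
    rw [Real.norm_of_nonneg (by positivity)] at hw
    rw [mul_assoc I]
    simpa only [hnorm] using abs_re_mul_I_mul_sub_le (by omega) hw
  refine intervalIntegral_pos_of_pos_of_le (M := 6 * μ * σ ^ (2 * k - 2)) Real.two_pi_pos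
    (by fun_prop) (fun t => ?_) (fun t => ?_)
  · nlinarith [(abs_le.mp (hbound t)).1, pow_pos hσ (2 * k - 2)]
  · linarith [(abs_le.mp (hbound t)).2]

theorem loop_integral_of_dh_positive (U : Set ℂ) (hU : IsOpen U) (h0U : (0 : ℂ) ∈ U)
    (h : ℂ → ℝ) (hh : ContDiffOn ℝ 1 h U) (k : ℕ) (hk : 3 ≤ k) (μ : ℝ) (hμ : 0 < μ)
    (hasymp : (fun ζ : ℂ =>
        wirtingerDz h ζ - (-2 * Complex.I * μ * (starRingEnd ℂ ζ) * ‖ζ‖ ^ (2 * k - 4)))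
      =o[nhds 0] (fun ζ : ℂ => ‖ζ‖ ^ (2 * k - 3))) :
    ∃ σ₀ > 0, ∀ σ : ℝ, 0 < σ → σ < σ₀ →
      0 < ∫ t in (0 : ℝ)..(2 * π),
        2 * (wirtingerDz h (σ * Complex.exp (t * Complex.I))
              * (Complex.I * σ * Complex.exp (t * Complex.I))).re :=
  loop_integral_of_dh_positive_general h k hk μ hμ hasymp
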